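/- Let G, G' : U → GL_q(ℂ) be holomorphic maps on an open set U ⊆ ℂⁿ. Then dG · G⁻¹ = dG' · (G')⁻¹ on U if and only if G' = G · A for some locally constant map A : U → GL_q(ℂ) (i.e. A has zero derivative on U). -/

import Mathlib

/-!
For `A := G⁻¹ * G'` the product and inverse rules give `dA = G⁻¹ (dG' - dG G⁻¹ G')`, which vanishes
exactly when `dG G⁻¹ = dG' G'⁻¹`. Conversely, if `G' = G * A` on the open set `U`, then `A` agrees
with `G⁻¹ * G'` near every point of `U`, so the two have the same derivative there.
-/

open ContinuousLinearMap
open scoped Ring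

section NormedAlgebra

variable {𝕜 E R : Type*} [NontriviallyNormedField 𝕜] [NormedAddCommGroup E] [NormedSpace 𝕜 E]
  [NormedRing R] [HasSummableGeomSeries R] [NormedAlgebra 𝕜 R] {f g : E → R} {p : E}

theorem fderiv_ringInverse_mul_apply (hf : DifferentiableAt 𝕜 f p) (hg : DifferentiableAt 𝕜 g p)
    (hfp : IsUnit (f p)) (v : E) :
    fderiv 𝕜 (fun x => (f x)⁻¹ʳ * g x) p v =
      (f p)⁻¹ʳ * (fderiv 𝕜 g p v - fderiv 𝕜 f p v * (f p)⁻¹ʳ * g p) := by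
  obtain ⟨u, hu⟩ := hfp
  have hinv : HasFDerivAt (fun x => (f x)⁻¹ʳ)
      ((-mulLeftRight 𝕜 R ↑u⁻¹ ↑u⁻¹).comp (fderiv 𝕜 f p)) p :=
    (hu ▸ hasFDerivAt_ringInverse u).comp p hf.hasFDerivAt
  rw [(hinv.fun_mul' hg.hasFDerivAt).fderiv, ← hu, Ring.inverse_unit]
  simp only [add_apply, smul_apply, comp_apply, neg_apply, mulLeftRight_apply, smul_eq_mul,
    op_smul_eq_mul]
  noncomm_ring

theorem fderiv_ringInverse_mul_eq_zero_iff (hf : DifferentiableAt 𝕜 f p)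
    (hg : DifferentiableAt 𝕜 g p) (hfp : IsUnit (f p)) (hgp : IsUnit (g p)) :
    fderiv 𝕜 (fun x => (f x)⁻¹ʳ * g x) p = 0 ↔
      ∀ v, fderiv 𝕜 f p v * (f p)⁻¹ʳ = fderiv 𝕜 g p v * (g p)⁻¹ʳ := by
  refine ContinuousLinearMap.ext_iff.trans (forall_congr' fun v => ?_)
  rw [fderiv_ringInverse_mul_apply hf hg hfp, zero_apply, hfp.ringInverse.mul_right_eq_zero,
    sub_eq_zero, Ring.eq_mul_inverse_iff_mul_eq _ _ _ hgp, eq_comm]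

end NormedAlgebra

attribute [local instance] Matrix.frobeniusNormedAddCommGroup Matrix.frobeniusNormedSpace
attribute [local instance] Matrix.frobeniusNormedRing Matrix.frobeniusNormedAlgebra

/-- For holomorphic `G, G' : U → GL_q(ℂ)` on an open `U ⊆ ℂⁿ`:
`dG·G⁻¹ = dG'·G'⁻¹` on `U` iff `G' = G·A` for some locally constant
(`i.e.` zero-derivative) invertible-valued map `A`. -/
theorem logDeriv_eq_iff_locally_constant_factor {n q : ℕ} {U : Set (Fin n → ℂ)}
    (hU : IsOpen U)
    (G G' : (Fin n → ℂ) → Matrix (Fin q) (Fin q) ℂ)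
    (hG : DifferentiableOn ℂ G U) (hG' : DifferentiableOn ℂ G' U)
    (hGinv : ∀ p ∈ U, IsUnit (G p)) (hG'inv : ∀ p ∈ U, IsUnit (G' p)) :
    (∀ p ∈ U, ∀ v : Fin n → ℂ,
        (fderiv ℂ G p v) * (G p)⁻¹ = (fderiv ℂ G' p v) * (G' p)⁻¹)
      ↔ ∃ A : (Fin n → ℂ) → Matrix (Fin q) (Fin q) ℂ,
          (∀ p ∈ U, IsUnit (A p)) ∧
          (∀ p ∈ U, fderiv ℂ A p = 0) ∧
          (∀ p ∈ U, G' p = G p * A p) := by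
  simp only [Matrix.nonsing_inv_eq_ringInverse]
  have key : ∀ p ∈ U, fderiv ℂ (fun x => (G x)⁻¹ʳ * G' x) p = 0 ↔
      ∀ v, fderiv ℂ G p v * (G p)⁻¹ʳ = fderiv ℂ G' p v * (G' p)⁻¹ʳ := fun p hp =>
    fderiv_ringInverse_mul_eq_zero_iff (hG.differentiableAt (hU.mem_nhds hp))
      (hG'.differentiableAt (hU.mem_nhds hp)) (hGinv p hp) (hG'inv p hp)
  constructor
  · intro h
    refine ⟨fun p => (G p)⁻¹ʳ * G' p, fun p hp => (hGinv p hp).ringInverse.mul (hG'inv p hp),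
      fun p hp => (key p hp).2 (h p hp),
      fun p hp => (Ring.mul_inverse_cancel_left _ _ (hGinv p hp)).symm⟩
  · rintro ⟨A, -, hA, hGA⟩ p hp
    have hA_eq : A =ᶠ[nhds p] fun x => (G x)⁻¹ʳ * G' x := by
      filter_upwards [hU.mem_nhds hp] with x hx
      rw [hGA x hx, Ring.inverse_mul_cancel_left _ _ (hGinv x hx)]
    exact (key p hp).1 (hA_eq.fderiv_eq (𝕜 := ℂ) ▸ hA p hp)
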